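/- arXiv:1811.00527 — 2 statements merged into one kernel-verified Lean document; each statement's English description precedes it below -/
import Mathlib

section
/- Let G be a group and c : G → ℝ a function with c(xy) ≤ c(x) + c(y) for all x, y. For f ∈ G define the homogenization σ(f) = lim_{k→∞} c(f^k)/k (which exists by subadditivity of k ↦ c(f^k), assuming this sequence is bounded below linearly). Then for all f, g ∈ G with q_f(g) := sup_{k∈ℤ} c(f^{-k} g f^k) + sup_{k∈ℤ} c(f^{-k} g^{-1} f^k) < +∞, one has |σ(fg) − σ(f) − σ(g)| ≤ q_f(g). -/
open Filter

private lemma pow_bound {G : Type*} [Group G] (c : G → ℝ)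
    (hc : ∀ x y : G, c (x * y) ≤ c x + c y) (g : G) :
    ∀ n : ℕ, 1 ≤ n → c (g ^ n) ≤ n * c g := by
  intro n hn
  induction n with
  | zero => omega
  | succ m ih =>
    rcases Nat.eq_or_lt_of_le hn with h | h
    · simp [← h]
    · have hm : 1 ≤ m := by omega
      have := hc (g ^ m) g
      rw [← pow_succ] at this
      have := ih hm
      push_cast
      nlinarith

private lemma sigma_le {G : Type*} [Group G] (c : G → ℝ)
    (σ : G → ℝ)
    (hσ : ∀ f : G, Filter.Tendsto (fun k : ℕ => c (f ^ k) / (k : ℝ))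
      Filter.atTop (nhds (σ f)))
    (a b : G) (C : ℝ) (h : ∀ n : ℕ, 1 ≤ n → c (a ^ n) ≤ c (b ^ n) + n * C) :
    σ a ≤ σ b + C := by
  refine le_of_tendsto_of_tendsto (hσ a) ((hσ b).add tendsto_const_nhds) ?_
  filter_upwards [eventually_ge_atTop 1] with n hn
  have hn' : (0:ℝ) < n := by exact_mod_cast hn
  have := h n hn
  show c (a ^ n) / n ≤ c (b ^ n) / n + C
  rw [div_add' _ _ _ (ne_of_gt hn'), div_le_div_iff_of_pos_right hn']
  linarith

/-- For a subadditive `c : G → ℝ` with homogenization `σ f = lim_k c (f^k)/k`,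
one has `|σ (f*g) − σ f − σ g| ≤ q_f(g)` whenever
`q_f(g) = ⨆ k, c (f^{-k} g f^k) + ⨆ k, c (f^{-k} g⁻¹ f^k)` is finite. -/
theorem stmt_1 {G : Type*} [Group G] (c : G → ℝ)
    (hc : ∀ x y : G, c (x * y) ≤ c x + c y)
    (σ : G → ℝ)
    (hσ : ∀ f : G, Filter.Tendsto (fun k : ℕ => c (f ^ k) / (k : ℝ))
      Filter.atTop (nhds (σ f)))
    (f g : G)
    (hbdd₁ : BddAbove (Set.range fun k : ℤ => c (f ^ (-k) * g * f ^ k)))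
    (hbdd₂ : BddAbove (Set.range fun k : ℤ => c (f ^ (-k) * g⁻¹ * f ^ k))) :
    |σ (f * g) - σ f - σ g| ≤
      (⨆ k : ℤ, c (f ^ (-k) * g * f ^ k)) +
      (⨆ k : ℤ, c (f ^ (-k) * g⁻¹ * f ^ k)) := by
  set A := ⨆ k : ℤ, c (f ^ (-k) * g * f ^ k) with hA
  set B := ⨆ k : ℤ, c (f ^ (-k) * g⁻¹ * f ^ k) with hB
  have hc1 : 0 ≤ c 1 := by have := hc 1 1; simp at this; linarith
  -- A bounds conjugates c ((f^n)⁻¹ * g * f^n)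
  have hAk : ∀ n : ℕ, c ((f ^ n)⁻¹ * g * f ^ n) ≤ A := by
    intro n
    have h := le_ciSup hbdd₁ (n : ℤ)
    rwa [zpow_neg, zpow_natCast] at h
  have hBk : ∀ n : ℕ, c ((f ^ n)⁻¹ * g⁻¹ * f ^ n) ≤ B := by
    intro n
    have h := le_ciSup hbdd₂ (n : ℤ)
    rwa [zpow_neg, zpow_natCast] at h
  have hgA : c g ≤ A := by simpa using hAk 0
  have hgB : c g⁻¹ ≤ B := by simpa using hBk 0
  -- key inequality 1
  have P : ∀ n : ℕ, ∀ x : G, c (x * (f * g) ^ n) ≤ c (x * f ^ n) + n * A := by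
    intro n
    induction n with
    | zero => intro x; simp
    | succ m ih =>
      intro x
      have h1 : x * (f * g) ^ (m + 1) = (x * (f * g)) * (f * g) ^ m := by
        simp [pow_succ', mul_assoc]
      have h2 : (x * (f * g)) * f ^ m = (x * f ^ (m + 1)) * ((f ^ m)⁻¹ * g * f ^ m) := by
        simp [pow_succ', mul_assoc]
      calc c (x * (f * g) ^ (m + 1)) = c ((x * (f * g)) * (f * g) ^ m) := by rw [h1]
        _ ≤ c ((x * (f * g)) * f ^ m) + m * A := ih _
        _ = c ((x * f ^ (m + 1)) * ((f ^ m)⁻¹ * g * f ^ m)) + m * A := by rw [h2]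
        _ ≤ c (x * f ^ (m + 1)) + c ((f ^ m)⁻¹ * g * f ^ m) + m * A := by
            linarith [hc (x * f ^ (m + 1)) ((f ^ m)⁻¹ * g * f ^ m)]
        _ ≤ c (x * f ^ (m + 1)) + (m + 1 : ℕ) * A := by
            push_cast; linarith [hAk m]
  have Q : ∀ n : ℕ, ∀ x : G, c (x * f ^ n) ≤ c (x * (f * g) ^ n) + n * B := by
    intro n
    induction n with
    | zero => intro x; simp
    | succ m ih =>
      intro x
      have h1 : x * f ^ (m + 1) = ((x * (f * g)) * f ^ m) * ((f ^ m)⁻¹ * g⁻¹ * f ^ m) := by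
        simp [pow_succ', mul_assoc]
      have h2 : (x * (f * g)) * (f * g) ^ m = x * (f * g) ^ (m + 1) := by
        simp [pow_succ', mul_assoc]
      calc c (x * f ^ (m + 1))
          = c (((x * (f * g)) * f ^ m) * ((f ^ m)⁻¹ * g⁻¹ * f ^ m)) := by rw [h1]
        _ ≤ c ((x * (f * g)) * f ^ m) + c ((f ^ m)⁻¹ * g⁻¹ * f ^ m) := hc _ _
        _ ≤ (c ((x * (f * g)) * (f * g) ^ m) + m * B) + B := by
            linarith [ih (x * (f * g)), hBk m]
        _ = c (x * (f * g) ^ (m + 1)) + (m + 1 : ℕ) * B := by rw [h2]; push_cast; ring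
  -- σ (f*g) ≤ σ f + A
  have hup : σ (f * g) ≤ σ f + A := by
    refine sigma_le c σ hσ _ _ _ ?_
    intro n hn
    have := P n 1
    simpa using this
  have hdown : σ f ≤ σ (f * g) + B := by
    refine sigma_le c σ hσ _ _ _ ?_
    intro n hn
    have := Q n 1
    simpa using this
  -- σ g ≤ c g and σ g ≥ - c g⁻¹
  have hgup : σ g ≤ c g := by
    have : σ g ≤ σ 1 + c g := by
      refine sigma_le c σ hσ _ _ _ ?_
      intro n hn
      have := pow_bound c hc g n hn
      simpa [hc1] using (le_trans this (by linarith))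
    have hσ1 : σ 1 = 0 := by
      have h0 : Filter.Tendsto (fun k : ℕ => c ((1:G) ^ k) / (k : ℝ)) atTop (nhds 0) := by
        simp only [one_pow]
        exact tendsto_const_div_atTop_nhds_zero_nat (c 1)
      exact tendsto_nhds_unique (hσ 1) h0
    linarith
  have hgdown : -c g⁻¹ ≤ σ g := by
    have key : ∀ n : ℕ, 1 ≤ n → -(n : ℝ) * c g⁻¹ ≤ c (g ^ n) := by
      intro n hn
      have h1 : c ((g ^ n) * (g⁻¹) ^ n) ≤ c (g ^ n) + c ((g⁻¹) ^ n) := hc _ _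
      have h2 : (g ^ n) * (g⁻¹) ^ n = 1 := by group
      rw [h2] at h1
      have h3 := pow_bound c hc g⁻¹ n hn
      linarith
    refine ge_of_tendsto (hσ g) ?_
    filter_upwards [eventually_ge_atTop 1] with n hn
    have hn' : (0:ℝ) < n := by exact_mod_cast hn
    have := key n hn
    rw [le_div_iff₀ hn']
    nlinarith
  rw [abs_le]
  constructor <;> linarith
end

section
/- Let M be a normal topological space, ψ : M → M a homeomorphism, and ζ a monotone functional on continuous bounded real functions on M satisfying ζ(F ∘ ψ) = ζ(F) for all F. If X is heavy (ζ(H) ≥ inf_X H for all H) and Y is superheavy (ζ(H) ≤ sup_Y H for all H), with X, Y closed, then ψ(X) ∩ Y ≠ ∅. -/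
/-!
If `ψ(X)` missed `Y`, Urysohn's lemma would give a bounded continuous `H` with `H = 0` on `ψ(X)`
and `H = -1` on `Y`. Since `ζ` is `ψ`-invariant, heaviness of `X` transfers to `ψ(X)`, so
`0 ≤ ζ H`, while superheaviness of `Y` gives `ζ H ≤ -1`.
-/

open BoundedContinuousFunction

namespace BoundedContinuousFunction

variable {M : Type*} [TopologicalSpace M]

def IsHeavy (ζ : (M →ᵇ ℝ) → ℝ) (X : Set M) : Prop :=
  ∀ H : M →ᵇ ℝ, sInf (⇑H '' X) ≤ ζ H

def IsSuperheavy (ζ : (M →ᵇ ℝ) → ℝ) (Y : Set M) : Prop :=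
  ∀ H : M →ᵇ ℝ, ζ H ≤ sSup (⇑H '' Y)

variable {ζ : (M →ᵇ ℝ) → ℝ} {X Y : Set M}

theorem IsHeavy.image_homeomorph (hX : IsHeavy ζ X) (ψ : M ≃ₜ M)
    (hinv : ∀ F : M →ᵇ ℝ, ζ (F.compContinuous (ψ : C(M, M))) = ζ F) :
    IsHeavy ζ (ψ '' X) := fun H => by
  have h := hX (H.compContinuous (ψ : C(M, M)))
  rwa [hinv, coe_compContinuous, Set.image_comp] at h

theorem IsHeavy.inter_nonempty_of_isSuperheavy [NormalSpace M] (hX : IsHeavy ζ X)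
    (hY : IsSuperheavy ζ Y) (hXc : IsClosed X) (hYc : IsClosed Y) (hYne : Y.Nonempty) :
    (X ∩ Y).Nonempty := by
  by_contra hXY
  have hdisj : Disjoint Y X := by
    rwa [Set.disjoint_iff_inter_eq_empty, Set.inter_comm, ← Set.not_nonempty_iff_eq_empty]
  obtain ⟨H, hHY, hHX, -⟩ :=
    exists_bounded_mem_Icc_of_closed_of_le hYc hXc hdisj (neg_nonpos.mpr zero_le_one)
  -- `H '' X` is `∅` or `{0}`, and `sInf` is `0` in both cases.
  have hInf : sInf (⇑H '' X) = 0 := by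
    have hsub : ⇑H '' X ⊆ {0} := Set.image_subset_iff.mpr hHX
    rcases Set.subset_singleton_iff_eq.mp hsub with hempty | hsingle
    · rw [hempty, Real.sInf_empty]
    · rw [hsingle, csInf_singleton]
  have hSup : sSup (⇑H '' Y) = -1 := by
    rw [hHY.image_eq.trans (hYne.image_const (-1 : ℝ)), csSup_singleton]
  linarith [hX H, hY H]

end BoundedContinuousFunction

theorem stmt_5_general {M : Type*} [TopologicalSpace M] [NormalSpace M]
    (ψ : M ≃ₜ M)
    (ζ : (M →ᵇ ℝ) → ℝ)
    (hinv : ∀ F : M →ᵇ ℝ, ζ (F.compContinuous (ψ : C(M, M))) = ζ F)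
    (X Y : Set M) (hX : IsClosed X) (hY : IsClosed Y)
    (hYne : Y.Nonempty)
    (hheavy : ∀ H : M →ᵇ ℝ, sInf (⇑H '' X) ≤ ζ H)
    (hsuper : ∀ H : M →ᵇ ℝ, ζ H ≤ sSup (⇑H '' Y)) :
    ((ψ '' X) ∩ Y).Nonempty :=
  (IsHeavy.image_homeomorph hheavy ψ hinv).inter_nonempty_of_isSuperheavy hsuper
    (ψ.isClosedMap X hX) hY hYne

/-- A heavy set is non-displaceable from a superheavy set: if `ζ` is monotone and
invariant under composition with a homeomorphism `ψ`, `X` is heavy and `Y` is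
superheavy, then `ψ(X) ∩ Y ≠ ∅`. -/
theorem stmt_5 {M : Type*} [TopologicalSpace M] [NormalSpace M]
    (ψ : M ≃ₜ M)
    (ζ : (M →ᵇ ℝ) → ℝ)
    (hmono : ∀ F G : M →ᵇ ℝ, (∀ x, F x ≤ G x) → ζ F ≤ ζ G)
    (hinv : ∀ F : M →ᵇ ℝ, ζ (F.compContinuous (ψ : C(M, M))) = ζ F)
    (X Y : Set M) (hX : IsClosed X) (hY : IsClosed Y)
    (hXne : X.Nonempty) (hYne : Y.Nonempty)
    (hheavy : ∀ H : M →ᵇ ℝ, sInf (⇑H '' X) ≤ ζ H)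
    (hsuper : ∀ H : M →ᵇ ℝ, ζ H ≤ sSup (⇑H '' Y)) :
    ((ψ '' X) ∩ Y).Nonempty :=
  stmt_5_general ψ ζ hinv X Y hX hY hYne hheavy hsuper
end
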